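/- Let B^H be fractional Brownian motion with Hurst parameter H ∈ (0,1/2]. Then its covariance R(s,t) = (1/2)(s^{2H}+t^{2H}-|t-s|^{2H}) has finite 2D 1/(2H)-variation, and moreover its 1/(2H)-variation over [s,t]² is bounded by C_H |t-s|^{2H} raised to the appropriate power; in particular |R|^{1/(2H)}_{1/(2H)-var;[s,t]²} ≤ C_H |t-s|. -/

import Mathlib

/-- A dissection (subdivision) of the interval `[s,t]`:
a monotone tuple starting at `s` and ending at `t`. -/
def IsDissection (s t : ℝ) {n : ℕ} (P : Fin (n + 1) → ℝ) : Prop :=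
  Monotone P ∧ P 0 = s ∧ P (Fin.last n) = t

/-- The rectangular increment `f((s,t),(u,v)) = f(s,u)+f(t,v)-f(s,v)-f(t,u)`. -/
def rectInc {B : Type*} [NormedAddCommGroup B] (f : ℝ → ℝ → B) (s t u v : ℝ) : B :=
  f s u + f t v - f s v - f t u

/-- The set of approximating sums for the 2D `ρ`-variation of `f` over `[s,t] × [u,v]`:
sums over pairs of dissections of the `ρ`-th powers of rectangular increments. -/
def varSums2D {B : Type*} [NormedAddCommGroup B] (f : ℝ → ℝ → B)
    (ρ s t u v : ℝ) : Set ℝ :=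
  { x | ∃ (n m : ℕ) (P : Fin (n + 1) → ℝ) (Q : Fin (m + 1) → ℝ),
      IsDissection s t P ∧ IsDissection u v Q ∧
      x = ∑ i : Fin n, ∑ j : Fin m,
        ‖rectInc f (P i.castSucc) (P i.succ) (Q j.castSucc) (Q j.succ)‖ ^ ρ }

/-- The set of approximating sums for the (1D) `ρ`-variation of a path over `[s,t]`. -/
def varSums1D {B : Type*} [NormedAddCommGroup B] (x : ℝ → B) (ρ s t : ℝ) : Set ℝ :=
  { y | ∃ (n : ℕ) (P : Fin (n + 1) → ℝ), IsDissection s t P ∧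
      y = ∑ i : Fin n, ‖x (P i.succ) - x (P i.castSucc)‖ ^ ρ }

/-- The covariance of fractional Brownian motion with Hurst parameter `H`. -/
noncomputable def fbmCov (H : ℝ) (s t : ℝ) : ℝ :=
  (1 / 2) * (s ^ (2 * H) + t ^ (2 * H) - |t - s| ^ (2 * H))


/-!
For a row `[a, b]` the map `w ↦ R(b, w) - R(a, w)` is a constant plus
`(|w - a| ^ (2H) - |w - b| ^ (2H)) / 2`. As `x ↦ x ^ (2H)` is concave for `2H ≤ 1`, this map
decreases on `(-∞, a]`, increases on `[a, b]` and decreases on `[b, ∞)`, so its total variation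
is at most `2 (b - a) ^ (2H)`. With `ρ = 1/(2H) ≥ 1`, a row of a 2D `ρ`-variation sum therefore
contributes at most `(∑_j |R-increment|) ^ ρ ≤ 2 ^ ρ (b - a)`, and the rows add up to
`2 ^ ρ (t - s)`.
-/

open Finset Set

lemma Fin.sum_succ_sub_castSucc {M : Type*} [AddCommGroup M] {m : ℕ} (g : Fin (m + 1) → M) :
    ∑ j : Fin m, (g j.succ - g j.castSucc) = g (Fin.last m) - g 0 := by
  rw [Finset.sum_sub_distrib, sub_eq_sub_iff_add_eq_add, add_comm, ← Fin.sum_univ_succ,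
    add_comm (g _), ← Fin.sum_univ_castSucc]

lemma Finset.sum_rpow_le_rpow_sum {ι : Type*} (s : Finset ι) {f : ι → ℝ}
    (hf : ∀ i ∈ s, 0 ≤ f i) {p : ℝ} (hp : 1 ≤ p) :
    ∑ i ∈ s, f i ^ p ≤ (∑ i ∈ s, f i) ^ p := by
  induction s using Finset.cons_induction with
  | empty => simp [Real.zero_rpow (by linarith : p ≠ 0)]
  | cons a s ha ih =>
    rw [sum_cons, sum_cons]
    have hfs : ∀ i ∈ s, 0 ≤ f i := fun i hi => hf i (mem_cons_of_mem hi)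
    calc f a ^ p + ∑ i ∈ s, f i ^ p ≤ f a ^ p + (∑ i ∈ s, f i) ^ p := by
          gcongr; exact ih hfs
      _ ≤ (f a + ∑ i ∈ s, f i) ^ p :=
          Real.add_rpow_le_rpow_add (hf a (mem_cons_self a s)) (sum_nonneg hfs) hp

lemma ConcaveOn.add_le_add_of_le {f : ℝ → ℝ} {s : Set ℝ} (hf : ConcaveOn ℝ s f)
    {x y δ : ℝ} (hx : x ∈ s) (hyδ : y + δ ∈ s) (hxy : x ≤ y) (hδ : 0 ≤ δ) :
    f (y + δ) + f x ≤ f (x + δ) + f y := by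
  rcases (show x ≤ y + δ by linarith).eq_or_lt with hxyδ | hxyδ
  · obtain rfl : y = x := by linarith
    obtain rfl : δ = 0 := by linarith
    rfl
  -- `x + δ` and `y` are the two convex combinations of `x` and `y + δ` with weights `μ`, `1 - μ`
  set μ := (y - x) / (y + δ - x)
  have hμ0 : 0 ≤ μ := div_nonneg (by linarith) (by linarith)
  have hμ1 : μ ≤ 1 := div_le_one_of_le₀ (by linarith) (by linarith)
  have hcomb₁ : μ * x + (1 - μ) * (y + δ) = x + δ := by
    simp only [μ]; field_simp; ring
  have hcomb₂ : (1 - μ) * x + μ * (y + δ) = y := by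
    simp only [μ]; field_simp; ring
  have h₁ := hf.2 hx hyδ hμ0 (sub_nonneg.2 hμ1) (add_sub_cancel μ 1)
  have h₂ := hf.2 hx hyδ (sub_nonneg.2 hμ1) hμ0 (sub_add_cancel 1 μ)
  simp only [smul_eq_mul, hcomb₁, hcomb₂] at h₁ h₂
  linarith

lemma Real.antitoneOn_rpow_add_sub_rpow {z δ : ℝ} (hz0 : 0 ≤ z) (hz1 : z ≤ 1) (hδ : 0 ≤ δ) :
    AntitoneOn (fun x : ℝ => (x + δ) ^ z - x ^ z) (Ici 0) := by
  intro x hx y hy hxy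
  have := (Real.concaveOn_rpow hz0 hz1).add_le_add_of_le hx
    (show y + δ ∈ Ici (0 : ℝ) from add_nonneg hy hδ) hxy hδ
  linarith

lemma sum_abs_sub_le_of_monotone_of_antitone_sub {α : Type*} [Preorder α] {f g : α → ℝ}
    (hg : Monotone g) (hfg : Antitone (f - g)) {m : ℕ} {Q : Fin (m + 1) → α}
    (hQ : Monotone Q) :
    ∑ j : Fin m, |f (Q j.succ) - f (Q j.castSucc)| ≤
      2 * (g (Q (Fin.last m)) - g (Q 0)) - (f (Q (Fin.last m)) - f (Q 0)) := by
  have hterm : ∀ j : Fin m, |f (Q j.succ) - f (Q j.castSucc)| ≤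
      2 * (g (Q j.succ) - g (Q j.castSucc)) - (f (Q j.succ) - f (Q j.castSucc)) := by
    intro j
    have hle := hQ (Fin.castSucc_le_succ j)
    have hgle := hg hle
    have hfgle := hfg hle
    simp only [Pi.sub_apply] at hfgle
    rw [abs_le]
    constructor <;> linarith
  calc ∑ j : Fin m, |f (Q j.succ) - f (Q j.castSucc)|
      ≤ ∑ j : Fin m, (2 * (g (Q j.succ) - g (Q j.castSucc)) - (f (Q j.succ) - f (Q j.castSucc))) :=
        sum_le_sum fun j _ => hterm j
    _ = 2 * (g (Q (Fin.last m)) - g (Q 0)) - (f (Q (Fin.last m)) - f (Q 0)) := by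
        rw [sum_sub_distrib, ← mul_sum, Fin.sum_succ_sub_castSucc fun j => g (Q j),
          Fin.sum_succ_sub_castSucc fun j => f (Q j)]

/-- The bound comes from splitting `f = f ∘ projIcc a b + (f - f ∘ projIcc a b)` into a monotone
and an antitone part. -/
lemma sum_abs_sub_le_of_antitoneOn_monotoneOn_antitoneOn {f : ℝ → ℝ} {a b : ℝ} (hab : a ≤ b)
    (hl : AntitoneOn f (Iic a)) (hm : MonotoneOn f (Icc a b)) (hr : AntitoneOn f (Ici b))
    {m : ℕ} {Q : Fin (m + 1) → ℝ} (hQ : Monotone Q) (hQa : Q 0 ≤ a)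
    (hQb : b ≤ Q (Fin.last m)) :
    ∑ j : Fin m, |f (Q j.succ) - f (Q j.castSucc)| ≤
      2 * (f b - f a) - (f (Q (Fin.last m)) - f (Q 0)) := by
  set g : ℝ → ℝ := fun w => f (projIcc a b hab w)
  have hg : Monotone g := fun c d hcd =>
    hm (projIcc a b hab c).2 (projIcc a b hab d).2 (monotone_projIcc hab hcd)
  have hfg : Antitone (f - g) := by
    intro c d hcd
    simp only [Pi.sub_apply, g]
    rcases le_total d a with hda | had
    · rw [projIcc_of_le_left hab hda, projIcc_of_le_left hab (hcd.trans hda)]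
      linarith [hl (mem_Iic.2 (hcd.trans hda)) (mem_Iic.2 hda) hcd]
    rcases le_total b c with hbc | hcb
    · rw [projIcc_of_right_le hab hbc, projIcc_of_right_le hab (hbc.trans hcd)]
      linarith [hr (mem_Ici.2 hbc) (mem_Ici.2 (hbc.trans hcd)) hcd]
    have hd : f d - f (projIcc a b hab d) ≤ 0 := by
      rcases le_total d b with hdb | hbd
      · rw [projIcc_of_mem hab ⟨had, hdb⟩, sub_self]
      · rw [projIcc_of_right_le hab hbd, sub_nonpos]
        exact hr (mem_Ici.2 le_rfl) (mem_Ici.2 hbd) hbd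
    have hc : 0 ≤ f c - f (projIcc a b hab c) := by
      rcases le_total c a with hca | hac
      · rw [projIcc_of_le_left hab hca, sub_nonneg]
        exact hl (mem_Iic.2 hca) (mem_Iic.2 le_rfl) hca
      · rw [projIcc_of_mem hab ⟨hac, hcb⟩, sub_self]
    linarith
  have hgb : g (Q (Fin.last m)) = f b := by simp only [g, projIcc_of_right_le hab hQb]
  have hga : g (Q 0) = f a := by simp only [g, projIcc_of_le_left hab hQa]
  simpa only [hgb, hga] using sum_abs_sub_le_of_monotone_of_antitone_sub hg hfg hQ

/-- `R(b, w) - R(a, w)` is, up to a constant, half of `distPowDiff (2H) a b w`. -/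
noncomputable def distPowDiff (z a b w : ℝ) : ℝ := |w - a| ^ z - |w - b| ^ z

section distPowDiff

variable {z a b : ℝ}

lemma distPowDiff_antitoneOn_Iic (hz0 : 0 ≤ z) (hz1 : z ≤ 1) (hab : a ≤ b) :
    AntitoneOn (distPowDiff z a b) (Iic a) := by
  intro c hc d hd hcd
  have key := Real.antitoneOn_rpow_add_sub_rpow hz0 hz1 (sub_nonneg.2 hab)
    (sub_nonneg.2 hd : 0 ≤ a - d) (sub_nonneg.2 hc : 0 ≤ a - c) (by linarith)
  simp only [sub_add_sub_cancel'] at key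
  simp only [distPowDiff, abs_sub_comm _ a, abs_sub_comm _ b,
    abs_of_nonneg (sub_nonneg.2 (mem_Iic.1 hc)), abs_of_nonneg (sub_nonneg.2 (mem_Iic.1 hd)),
    abs_of_nonneg (sub_nonneg.2 ((mem_Iic.1 hc).trans hab)),
    abs_of_nonneg (sub_nonneg.2 ((mem_Iic.1 hd).trans hab))]
  linarith

lemma distPowDiff_monotoneOn_Icc (hz0 : 0 ≤ z) : MonotoneOn (distPowDiff z a b) (Icc a b) := by
  rintro c ⟨hac, hcb⟩ d ⟨had, hdb⟩ hcd
  simp only [distPowDiff, abs_sub_comm _ b, abs_of_nonneg (sub_nonneg.2 hac),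
    abs_of_nonneg (sub_nonneg.2 had), abs_of_nonneg (sub_nonneg.2 hcb),
    abs_of_nonneg (sub_nonneg.2 hdb)]
  have h₁ : (c - a) ^ z ≤ (d - a) ^ z := Real.rpow_le_rpow (by linarith) (by linarith) hz0
  have h₂ : (b - d) ^ z ≤ (b - c) ^ z := Real.rpow_le_rpow (by linarith) (by linarith) hz0
  linarith

lemma distPowDiff_antitoneOn_Ici (hz0 : 0 ≤ z) (hz1 : z ≤ 1) (hab : a ≤ b) :
    AntitoneOn (distPowDiff z a b) (Ici b) := by
  intro c hc d hd hcd
  have key := Real.antitoneOn_rpow_add_sub_rpow hz0 hz1 (sub_nonneg.2 hab)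
    (sub_nonneg.2 hc : 0 ≤ c - b) (sub_nonneg.2 hd : 0 ≤ d - b) (by linarith)
  simp only [sub_add_sub_cancel] at key
  simp only [distPowDiff, abs_of_nonneg (sub_nonneg.2 (mem_Ici.1 hc)),
    abs_of_nonneg (sub_nonneg.2 (mem_Ici.1 hd)),
    abs_of_nonneg (sub_nonneg.2 (hab.trans (mem_Ici.1 hc))),
    abs_of_nonneg (sub_nonneg.2 (hab.trans (mem_Ici.1 hd)))]
  exact key

lemma distPowDiff_nonpos {w : ℝ} (hz0 : 0 ≤ z) (hwa : w ≤ a) (hab : a ≤ b) :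
    distPowDiff z a b w ≤ 0 := by
  rw [distPowDiff, sub_nonpos]
  refine Real.rpow_le_rpow (abs_nonneg _) ?_ hz0
  rw [abs_of_nonpos (by linarith), abs_of_nonpos (by linarith)]
  linarith

lemma distPowDiff_nonneg {w : ℝ} (hz0 : 0 ≤ z) (hab : a ≤ b) (hbw : b ≤ w) :
    0 ≤ distPowDiff z a b w := by
  rw [distPowDiff, sub_nonneg]
  refine Real.rpow_le_rpow (abs_nonneg _) ?_ hz0
  rw [abs_of_nonneg (by linarith), abs_of_nonneg (by linarith)]
  linarith

lemma distPowDiff_right_sub_left (hz0 : 0 < z) (hab : a ≤ b) :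
    distPowDiff z a b b - distPowDiff z a b a = 2 * (b - a) ^ z := by
  simp only [distPowDiff, sub_self, abs_zero, Real.zero_rpow hz0.ne', abs_sub_comm a b,
    abs_of_nonneg (sub_nonneg.2 hab)]
  ring

lemma sum_abs_sub_distPowDiff_le (hz0 : 0 < z) (hz1 : z ≤ 1) (hab : a ≤ b) {m : ℕ}
    {Q : Fin (m + 1) → ℝ} (hQ : Monotone Q) (hQa : Q 0 ≤ a) (hQb : b ≤ Q (Fin.last m)) :
    ∑ j : Fin m, |distPowDiff z a b (Q j.succ) - distPowDiff z a b (Q j.castSucc)| ≤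
      4 * (b - a) ^ z := by
  have key := sum_abs_sub_le_of_antitoneOn_monotoneOn_antitoneOn hab
    (distPowDiff_antitoneOn_Iic hz0.le hz1 hab) (distPowDiff_monotoneOn_Icc hz0.le)
    (distPowDiff_antitoneOn_Ici hz0.le hz1 hab) hQ hQa hQb
  rw [distPowDiff_right_sub_left hz0 hab] at key
  linarith [distPowDiff_nonpos hz0.le hQa hab, distPowDiff_nonneg hz0.le hab hQb]

end distPowDiff

lemma rectInc_fbmCov (H a b c d : ℝ) :
    rectInc (fbmCov H) a b c d = (distPowDiff (2 * H) a b d - distPowDiff (2 * H) a b c) / 2 := by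
  simp only [rectInc, fbmCov, distPowDiff]
  ring

lemma sum_abs_rectInc_fbmCov_le {H a b : ℝ} (hH0 : 0 < H) (hH : H ≤ 1 / 2) (hab : a ≤ b)
    {m : ℕ} {Q : Fin (m + 1) → ℝ} (hQ : Monotone Q) (hQa : Q 0 ≤ a)
    (hQb : b ≤ Q (Fin.last m)) :
    ∑ j : Fin m, |rectInc (fbmCov H) a b (Q j.castSucc) (Q j.succ)| ≤ 2 * (b - a) ^ (2 * H) := by
  have key := sum_abs_sub_distPowDiff_le (z := 2 * H) (by linarith) (by linarith) hab hQ hQa hQb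
  simp only [rectInc_fbmCov, abs_div, abs_two, ← sum_div]
  linarith

lemma varSums2D_le_of_sum_norm_rectInc_le {B : Type*} [NormedAddCommGroup B]
    {f : ℝ → ℝ → B} {ρ s t u v C : ℝ} (hρ : 1 ≤ ρ) (hC : 0 ≤ C)
    (hrow : ∀ a b, s ≤ a → a ≤ b → b ≤ t → ∀ {m : ℕ} (Q : Fin (m + 1) → ℝ),
      IsDissection u v Q →
        ∑ j : Fin m, ‖rectInc f a b (Q j.castSucc) (Q j.succ)‖ ≤ C * (b - a) ^ ρ⁻¹) :
    ∀ x ∈ varSums2D f ρ s t u v, x ≤ C ^ ρ * (t - s) := by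
  rintro x ⟨n, m, P, Q, ⟨hPm, hP0, hPl⟩, hQ, rfl⟩
  have hrowρ : ∀ i : Fin n,
      ∑ j : Fin m, ‖rectInc f (P i.castSucc) (P i.succ) (Q j.castSucc) (Q j.succ)‖ ^ ρ ≤
        C ^ ρ * (P i.succ - P i.castSucc) := by
    intro i
    have hle := hPm (Fin.castSucc_le_succ i)
    have hs : s ≤ P i.castSucc := hP0 ▸ hPm (Fin.zero_le _)
    have ht : P i.succ ≤ t := hPl ▸ hPm (Fin.le_last _)
    calc ∑ j : Fin m, ‖rectInc f (P i.castSucc) (P i.succ) (Q j.castSucc) (Q j.succ)‖ ^ ρ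
        ≤ (∑ j : Fin m, ‖rectInc f (P i.castSucc) (P i.succ) (Q j.castSucc) (Q j.succ)‖) ^ ρ :=
          sum_rpow_le_rpow_sum _ (fun _ _ => norm_nonneg _) hρ
      _ ≤ (C * (P i.succ - P i.castSucc) ^ ρ⁻¹) ^ ρ :=
          Real.rpow_le_rpow (sum_nonneg fun _ _ => norm_nonneg _) (hrow _ _ hs hle ht Q hQ)
            (by linarith)
      _ = C ^ ρ * (P i.succ - P i.castSucc) := by
          rw [Real.mul_rpow hC (Real.rpow_nonneg (sub_nonneg.2 hle) _),
            Real.rpow_inv_rpow (sub_nonneg.2 hle) (by linarith)]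
  calc ∑ i : Fin n, ∑ j : Fin m,
        ‖rectInc f (P i.castSucc) (P i.succ) (Q j.castSucc) (Q j.succ)‖ ^ ρ
      ≤ ∑ i : Fin n, C ^ ρ * (P i.succ - P i.castSucc) := sum_le_sum fun i _ => hrowρ i
    _ = C ^ ρ * (t - s) := by rw [← mul_sum, Fin.sum_succ_sub_castSucc, hPl, hP0]

lemma fbmCov_varSums2D_le {H s t u v : ℝ} (hH0 : 0 < H) (hH : H ≤ 1 / 2) (hus : u ≤ s)
    (htv : t ≤ v) :
    ∀ x ∈ varSums2D (fbmCov H) (1 / (2 * H)) s t u v, x ≤ 2 ^ (1 / (2 * H)) * (t - s) := by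
  refine varSums2D_le_of_sum_norm_rectInc_le
    (by rw [le_div_iff₀ (by linarith)]; linarith) zero_le_two ?_
  rintro a b hsa hab hbt m Q ⟨hQm, hQ0, hQl⟩
  simp only [Real.norm_eq_abs, one_div, inv_inv]
  exact sum_abs_rectInc_fbmCov_le hH0 hH hab hQm (hQ0 ▸ hus.trans hsa) (hQl ▸ hbt.trans htv)

/-- for `H ∈ (0,1/2]`, the covariance of fractional Brownian motion has
finite 2D `1/(2H)`-variation, and its `1/(2H)`-variation (to the power `1/(2H)`) over
`[s,t]²` is bounded by `C_H |t-s|`. -/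
theorem stmt_5 (H : ℝ) (hH0 : 0 < H) (hH : H ≤ 1 / 2) :
    ∃ C : ℝ, 0 < C ∧
      (BddAbove (varSums2D (fbmCov H) (1 / (2 * H)) 0 1 0 1) ∧
      ∀ s t, 0 ≤ s → s ≤ t → t ≤ 1 →
        ∀ x ∈ varSums2D (fbmCov H) (1 / (2 * H)) s t s t, x ≤ C * (t - s)) := by
  refine ⟨2 ^ (1 / (2 * H)), by positivity, ⟨2 ^ (1 / (2 * H)), fun x hx => ?_⟩,
    fun s t _ _ _ => fbmCov_varSums2D_le hH0 hH le_rfl le_rfl⟩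
  simpa using fbmCov_varSums2D_le hH0 hH le_rfl le_rfl x hx
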